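/- For 0 < t < x, Φ(-x) ≤ e^{-t(x-t) - (x-t)²/2} Φ(-t), and consequently ∫_t^∞ Φ^{1/2}(-x) dx ≤ Φ^{1/2}(-t) · min(2/t, √π). -/

import Mathlib

open MeasureTheory Set

noncomputable def stdPDF (x : ℝ) : ℝ := Real.exp (-x^2/2) / Real.sqrt (2*Real.pi)

noncomputable def stdCDF (t : ℝ) : ℝ := ∫ x in Set.Iic t, stdPDF x

/-!
Shifting the Gaussian density by `d = x - t ≥ 0` costs at most the factor
`exp (-t d - d² / 2)` on the half-line `u ≤ -t`, since there `u d ≤ -t d`; integrating over that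
half-line gives the tail bound. Its square root is dominated both by `exp (-t d / 2)` and by
`exp (-d² / 4)`, whose integrals over `d > 0` are `2 / t` and `√π`.
-/

section Shift

variable {E : Type*} [NormedAddCommGroup E]

theorem integrableOn_Ioi_comp_sub_right_iff (f : ℝ → E) (a c : ℝ) :
    IntegrableOn (fun x => f (x - c)) (Ioi (a + c)) ↔ IntegrableOn f (Ioi a) := by
  rw [← preimage_sub_const_Ioi]
  exact (measurePreserving_sub_right volume c).integrableOn_comp_preimage
    (measurableEmbedding_subRight c)

variable [NormedSpace ℝ E]

theorem setIntegral_Iic_comp_sub_right (f : ℝ → E) (a c : ℝ) :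
    ∫ x in Iic (a + c), f (x - c) = ∫ x in Iic a, f x := by
  rw [← preimage_sub_const_Iic]
  exact (measurePreserving_sub_right volume c).setIntegral_preimage_emb
    (measurableEmbedding_subRight c) f _

theorem setIntegral_Ioi_comp_sub_right (f : ℝ → E) (a c : ℝ) :
    ∫ x in Ioi (a + c), f (x - c) = ∫ x in Ioi a, f x := by
  rw [← preimage_sub_const_Ioi]
  exact (measurePreserving_sub_right volume c).setIntegral_preimage_emb
    (measurableEmbedding_subRight c) f _

end Shift

theorem integral_Ioi_le_mul_integral_Ioi_zero {f g : ℝ → ℝ} {t C : ℝ}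
    (hf : ∀ x, 0 ≤ f x) (hg : IntegrableOn g (Ioi 0)) (hfg : ∀ x, t < x → f x ≤ C * g (x - t)) :
    ∫ x in Ioi t, f x ≤ C * ∫ y in Ioi 0, g y := by
  have hg' : IntegrableOn (fun x => g (x - t)) (Ioi t) := by
    simpa using (integrableOn_Ioi_comp_sub_right_iff g 0 t).2 hg
  calc ∫ x in Ioi t, f x ≤ ∫ x in Ioi t, C * g (x - t) :=
        integral_mono_of_nonneg (.of_forall hf) (hg'.const_mul C)
          (ae_restrict_of_forall_mem measurableSet_Ioi hfg)
    _ = C * ∫ y in Ioi 0, g y := by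
        rw [integral_const_mul, ← setIntegral_Ioi_comp_sub_right g 0 t, zero_add]

theorem integrable_stdPDF : Integrable stdPDF := by
  have hgauss : Integrable fun x : ℝ => Real.exp (-(1/2) * x ^ 2) :=
    integrable_exp_neg_mul_sq (by norm_num)
  refine (hgauss.div_const (Real.sqrt (2 * Real.pi))).congr (.of_forall fun x => ?_)
  simp only [stdPDF]
  ring_nf

theorem stdPDF_sub_le_exp_mul {t u d : ℝ} (hu : u ≤ -t) (hd : 0 ≤ d) :
    stdPDF (u - d) ≤ Real.exp (-t*d - d^2/2) * stdPDF u := by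
  have hexp : Real.exp (-(u - d)^2/2) ≤ Real.exp (-t*d - d^2/2) * Real.exp (-u^2/2) := by
    rw [← Real.exp_add, Real.exp_le_exp]
    nlinarith [mul_nonneg (by linarith : (0:ℝ) ≤ -u - t) hd]
  simp only [stdPDF, mul_div_assoc']
  gcongr

theorem stdCDF_neg_le_exp_mul {t x : ℝ} (hx : t ≤ x) :
    stdCDF (-x) ≤ Real.exp (-t*(x-t) - (x-t)^2/2) * stdCDF (-t) := by
  have hshift : stdCDF (-x) = ∫ u in Iic (-t), stdPDF (u - (x - t)) := by
    rw [stdCDF, ← setIntegral_Iic_comp_sub_right stdPDF (-x) (x - t)]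
    ring_nf
  rw [hshift, stdCDF, ← integral_const_mul]
  exact setIntegral_mono_on (integrable_stdPDF.comp_sub_right _).integrableOn
    (integrable_stdPDF.const_mul _).integrableOn measurableSet_Iic
    fun u hu => stdPDF_sub_le_exp_mul hu (sub_nonneg.2 hx)

theorem sqrt_stdCDF_neg_le_exp_mul {t x : ℝ} (hx : t ≤ x) :
    Real.sqrt (stdCDF (-x)) ≤ Real.sqrt (stdCDF (-t)) * Real.exp (-t*(x-t)/2 - (x-t)^2/4) :=
  calc Real.sqrt (stdCDF (-x))
      ≤ Real.sqrt (Real.exp (-t*(x-t) - (x-t)^2/2) * stdCDF (-t)) :=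
        Real.sqrt_le_sqrt (stdCDF_neg_le_exp_mul hx)
    _ = Real.sqrt (stdCDF (-t)) * Real.exp (-t*(x-t)/2 - (x-t)^2/4) := by
        rw [Real.sqrt_mul (Real.exp_nonneg _), ← Real.exp_half, mul_comm]
        ring_nf

theorem integral_sqrt_stdCDF_neg_le_div {t : ℝ} (ht : 0 < t) :
    ∫ x in Ioi t, Real.sqrt (stdCDF (-x)) ≤ Real.sqrt (stdCDF (-t)) * (2 / t) := by
  have hint : ∫ y in Ioi 0, Real.exp (-(t/2) * y) = 2 / t := by
    rw [integral_exp_mul_Ioi (by linarith) 0]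
    field_simp
    simp
  rw [← hint]
  refine integral_Ioi_le_mul_integral_Ioi_zero (fun _ => Real.sqrt_nonneg _)
    (exp_neg_integrableOn_Ioi 0 (by positivity)) fun x hx => ?_
  refine (sqrt_stdCDF_neg_le_exp_mul hx.le).trans (mul_le_mul_of_nonneg_left ?_ (Real.sqrt_nonneg _))
  rw [Real.exp_le_exp]
  nlinarith [sq_nonneg (x - t)]

theorem integral_sqrt_stdCDF_neg_le_sqrt_pi {t : ℝ} (ht : 0 ≤ t) :
    ∫ x in Ioi t, Real.sqrt (stdCDF (-x)) ≤ Real.sqrt (stdCDF (-t)) * Real.sqrt Real.pi := by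
  have hint : ∫ y in Ioi 0, Real.exp (-(1/4) * y ^ 2) = Real.sqrt Real.pi := by
    rw [integral_gaussian_Ioi, show Real.pi / (1/4) = 2^2 * Real.pi by ring,
      Real.sqrt_mul (by positivity), Real.sqrt_sq (by norm_num)]
    ring
  rw [← hint]
  refine integral_Ioi_le_mul_integral_Ioi_zero (fun _ => Real.sqrt_nonneg _)
    (integrable_exp_neg_mul_sq (by norm_num)).integrableOn fun x hx => ?_
  refine (sqrt_stdCDF_neg_le_exp_mul hx.le).trans (mul_le_mul_of_nonneg_left ?_ (Real.sqrt_nonneg _))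
  rw [Real.exp_le_exp]
  nlinarith [mul_nonneg ht (sub_nonneg.2 hx.le)]

theorem stmt16 (t : ℝ) (ht : 0 < t) :
    (∀ x : ℝ, t < x →
      stdCDF (-x) ≤ Real.exp (-t*(x-t) - (x-t)^2/2) * stdCDF (-t)) ∧
    (∫ x in Set.Ioi t, Real.sqrt (stdCDF (-x))) ≤
      Real.sqrt (stdCDF (-t)) * min (2/t) (Real.sqrt Real.pi) := by
  refine ⟨fun x hx => stdCDF_neg_le_exp_mul hx.le, ?_⟩
  rw [mul_min_of_nonneg _ _ (Real.sqrt_nonneg _)]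
  exact le_min (integral_sqrt_stdCDF_neg_le_div ht) (integral_sqrt_stdCDF_neg_le_sqrt_pi ht.le)
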